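/- Vectorization identity: for quaternion matrices A : Matrix m k ℍ, B : Matrix k l ℍ, C : Matrix l n ℍ, one has vec(A ·_L (B ·_R C)) = (Cᵀ ⊗_R A) ·_L vec(B); that is, for all indices i ∈ m, j ∈ n: (A ·_L (B ·_R C))_{i,j} = ∑_{(q,p) ∈ l × k} (A_{i,p} * C_{q,j}) * B_{p,q}. -/

import Mathlib

open scoped Quaternion
open Matrix

/-- Left matrix product of quaternion matrices: the usual matrix product,
`(A ·_L B)_{i,j} = ∑ k, A_{i,k} * B_{k,j}`. -/
noncomputable def mulL {m k n : Type*} [Fintype k] (A : Matrix m k ℍ[ℝ]) (B : Matrix k n ℍ[ℝ]) :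
    Matrix m n ℍ[ℝ] := A * B

/-- Right matrix product of quaternion matrices:
`A ·_R B := (Bᵀ * Aᵀ)ᵀ`, i.e. `(A ·_R B)_{i,j} = ∑ k, B_{k,j} * A_{i,k}`. -/
noncomputable def mulR {m k n : Type*} [Fintype k] (A : Matrix m k ℍ[ℝ]) (B : Matrix k n ℍ[ℝ]) :
    Matrix m n ℍ[ℝ] := (Bᵀ * Aᵀ)ᵀ

/-- Right Kronecker product of quaternion matrices:
`(A ⊗_R B)_{(i₁,i₂),(j₁,j₂)} = B_{i₂,j₂} * A_{i₁,j₁}`. -/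
noncomputable def kronR {m₁ n₁ m₂ n₂ : Type*} (A : Matrix m₁ n₁ ℍ[ℝ]) (B : Matrix m₂ n₂ ℍ[ℝ]) :
    Matrix (m₁ × m₂) (n₁ × n₂) ℍ[ℝ] :=
  fun i j => B i.2 j.2 * A i.1 j.1

/-- Column-major vectorization: for `X : Matrix k l ℍ`, `vec X` is the column vector
indexed by `l × k` with `(vec X)_{(j,i)} = X_{i,j}`. -/
def vec {k l : Type*} (X : Matrix k l ℍ[ℝ]) : Matrix (l × k) (Fin 1) ℍ[ℝ] :=
  fun p _ => X p.2 p.1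

theorem mulR_apply {m k n : Type*} [Fintype k] (A : Matrix m k ℍ[ℝ]) (B : Matrix k n ℍ[ℝ])
    (i : m) (j : n) : mulR A B i j = ∑ p, B p j * A i p := by
  simp only [mulR, transpose_apply, mul_apply]

theorem mulL_mulR_apply {m k l n : Type*} [Fintype k] [Fintype l]
    (A : Matrix m k ℍ[ℝ]) (B : Matrix k l ℍ[ℝ]) (C : Matrix l n ℍ[ℝ]) (i : m) (j : n) :
    mulL A (mulR B C) i j = ∑ qp : l × k, (A i qp.2 * C qp.1 j) * B qp.2 qp.1 := by
  simp only [mulL, mul_apply, mulR_apply, Finset.mul_sum, mul_assoc, Fintype.sum_prod_type]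
  exact Finset.sum_comm

theorem mulL_kronR_vec_apply {m k l n : Type*} [Fintype k] [Fintype l]
    (X : Matrix n l ℍ[ℝ]) (A : Matrix m k ℍ[ℝ]) (B : Matrix k l ℍ[ℝ]) (j : n) (i : m)
    (o : Fin 1) :
    mulL (kronR X A) (_root_.vec B) (j, i) o = ∑ qp : l × k, (A i qp.2 * X j qp.1) * B qp.2 qp.1 :=
  rfl

/-- Vectorization identity: `vec (A ·_L (B ·_R C)) = (Cᵀ ⊗_R A) ·_L vec B`; that is,
for all `i, j`: `(A ·_L (B ·_R C))_{i,j} = ∑ (q,p), (A_{i,p} * C_{q,j}) * B_{p,q}`. -/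
theorem vec_mulL_mulR (m k l n : Type*) [Fintype k] [Fintype l]
    (A : Matrix m k ℍ[ℝ]) (B : Matrix k l ℍ[ℝ]) (C : Matrix l n ℍ[ℝ]) :
    _root_.vec (mulL A (mulR B C)) = mulL (kronR Cᵀ A) (_root_.vec B) ∧
    ∀ (i : m) (j : n),
      mulL A (mulR B C) i j = ∑ qp : l × k, (A i qp.2 * C qp.1 j) * B qp.2 qp.1 := by
  refine ⟨?_, mulL_mulR_apply A B C⟩
  funext ⟨j, i⟩ o
  exact (mulL_mulR_apply A B C i j).trans (mulL_kronR_vec_apply Cᵀ A B j i o).symm
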